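/- arXiv:1212.0969 — 13 statements merged into one kernel-verified Lean document; each statement's English description precedes it below -/
import Mathlib

section
/- Let E be a Banach space and (x_j)_j a sequence of non-zero elements of E. Define Λ := { α = (α_j)_j ∈ ℝ^ℕ : the series ∑_j α_j x_j converges in E }, with norm q(α) := sup_n ‖∑_{j=1}^n α_j x_j‖. Then (Λ, q) is a Banach space and the canonical unit vectors (e_k)_k form a Schauder basis of Λ. -/
open Filter Topology

/-- For a sequence `(x_j)` of nonzero vectors of a Banach space `E`, the sequence space
`Λ = {α : ∑ α_j x_j converges}` with the norm `q(α) = sup_n ‖∑_{j≤n} α_j x_j‖` is a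
Banach space in which the canonical unit vectors form a Schauder basis. -/
theorem stmt1 {E : Type*} [NormedAddCommGroup E] [NormedSpace ℝ E] [CompleteSpace E]
    (x : ℕ → E) (hx : ∀ j, x j ≠ 0)
    (Λ : Set (ℕ → ℝ))
    (hΛ : Λ = {α : ℕ → ℝ |
      ∃ s : E, Tendsto (fun n => ∑ j ∈ Finset.range n, α j • x j) atTop (𝓝 s)})
    (q : (ℕ → ℝ) → ℝ)
    (hq : ∀ α, q α = ⨆ n : ℕ, ‖∑ j ∈ Finset.range n, α j • x j‖) :
    -- Λ is a linear subspace
    (∀ α ∈ Λ, ∀ β ∈ Λ, α + β ∈ Λ) ∧ (∀ α ∈ Λ, ∀ c : ℝ, c • α ∈ Λ) ∧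
    -- (Λ, q) is complete
    (∀ a : ℕ → (ℕ → ℝ), (∀ m, a m ∈ Λ) →
      (∀ ε > 0, ∃ N, ∀ m ≥ N, ∀ n ≥ N, q (a m - a n) < ε) →
      ∃ α ∈ Λ, Tendsto (fun m => q (a m - α)) atTop (𝓝 0)) ∧
    -- the canonical unit vectors form a Schauder basis: existence of the expansion
    (∀ α ∈ Λ,
      Tendsto (fun n => q (α - ∑ j ∈ Finset.range n, α j • (Pi.single j (1 : ℝ) : ℕ → ℝ)))
        atTop (𝓝 0)) ∧
    -- and uniqueness of the coefficients
    (∀ α ∈ Λ, ∀ c : ℕ → ℝ,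
      Tendsto (fun n => q (α - ∑ j ∈ Finset.range n, c j • (Pi.single j (1 : ℝ) : ℕ → ℝ)))
        atTop (𝓝 0) → c = α) := by
  -- notation for partial sums
  set S : (ℕ → ℝ) → ℕ → E := fun β n => ∑ j ∈ Finset.range n, β j • x j with hS
  have hmem : ∀ β : ℕ → ℝ, β ∈ Λ ↔ ∃ s : E, Tendsto (S β) atTop (𝓝 s) := by
    intro β; rw [hΛ]; exact Iff.rfl
  have hSsub : ∀ β γ : ℕ → ℝ, ∀ n, S (β - γ) n = S β n - S γ n := by
    intro β γ n; simp [hS, sub_smul, Finset.sum_sub_distrib]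
  have hSadd : ∀ β γ : ℕ → ℝ, ∀ n, S (β + γ) n = S β n + S γ n := by
    intro β γ n; simp [hS, add_smul, Finset.sum_add_distrib]
  have hSsmul : ∀ (c : ℝ) (β : ℕ → ℝ) (n : ℕ), S (c • β) n = c • S β n := by
    intro c β n; simp [hS, Finset.smul_sum, smul_smul]
  have hq' : ∀ β, q β = ⨆ n, ‖S β n‖ := hq
  have hq0 : ∀ β, 0 ≤ q β := by
    intro β; rw [hq']; exact Real.iSup_nonneg fun n => norm_nonneg _
  have hxpos : ∀ j, (0:ℝ) < ‖x j‖ := fun j => norm_pos_iff.mpr (hx j)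
  -- the sup is a genuine bound for members of Λ
  have hle : ∀ β : ℕ → ℝ, β ∈ Λ → ∀ k, ‖S β k‖ ≤ q β := by
    intro β hβ k
    obtain ⟨s, hs⟩ := (hmem β).1 hβ
    rw [hq']
    exact le_ciSup hs.norm.bddAbove_range k
  have hqle : ∀ (β : ℕ → ℝ) (c : ℝ), 0 ≤ c → (∀ k, ‖S β k‖ ≤ c) → q β ≤ c := by
    intro β c hc h; rw [hq']; exact Real.iSup_le h hc
  -- Λ is closed under subtraction
  have hsubΛ : ∀ β ∈ Λ, ∀ γ ∈ Λ, β - γ ∈ Λ := by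
    intro β hβ γ hγ
    obtain ⟨s, hs⟩ := (hmem β).1 hβ
    obtain ⟨t, ht⟩ := (hmem γ).1 hγ
    exact (hmem _).2 ⟨s - t, (hs.sub ht).congr fun n => (hSsub β γ n).symm⟩
  -- the coordinate-difference bound
  have hcd : ∀ β ∈ Λ, ∀ j, ‖β j • x j‖ ≤ 2 * q β := by
    intro β hβ j
    have h1 : β j • x j = S β (j+1) - S β j := by
      simp [hS, Finset.sum_range_succ]
    rw [h1]
    calc ‖S β (j+1) - S β j‖ ≤ ‖S β (j+1)‖ + ‖S β j‖ := norm_sub_le _ _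
      _ ≤ q β + q β := add_le_add (hle β hβ _) (hle β hβ _)
      _ = 2 * q β := by ring
  -- truncations
  have hT : ∀ (c : ℕ → ℝ) (n i : ℕ),
      (∑ j ∈ Finset.range n, c j • (Pi.single j (1:ℝ) : ℕ → ℝ)) i
        = if i < n then c i else 0 := by
    intro c n i
    simp [Finset.sum_apply, Pi.single_apply, Finset.sum_ite_eq, Finset.mem_range]
  have hST : ∀ (c : ℕ → ℝ) (n k : ℕ),
      S (∑ j ∈ Finset.range n, c j • (Pi.single j (1:ℝ) : ℕ → ℝ)) k = S c (min n k) := by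
    intro c n k
    have hfil : (Finset.range k).filter (fun j => j < n) = Finset.range (min n k) := by
      ext j; simp [Finset.mem_filter, Finset.mem_range]; omega
    calc S (∑ j ∈ Finset.range n, c j • (Pi.single j (1:ℝ) : ℕ → ℝ)) k
        = ∑ j ∈ Finset.range k, (if j < n then c j else 0) • x j := by
          simp only [hS]; exact Finset.sum_congr rfl fun j _ => by rw [hT]
      _ = ∑ j ∈ Finset.range k, (if j < n then c j • x j else 0) := by
          refine Finset.sum_congr rfl fun j _ => ?_
          split <;> simp
      _ = ∑ j ∈ (Finset.range k).filter (fun j => j < n), c j • x j := by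
          rw [Finset.sum_filter]
      _ = S c (min n k) := by rw [hfil]
  -- truncations are in Λ
  have hTΛ : ∀ (c : ℕ → ℝ) (n : ℕ),
      (∑ j ∈ Finset.range n, c j • (Pi.single j (1:ℝ) : ℕ → ℝ)) ∈ Λ := by
    intro c n
    refine (hmem _).2 ⟨S c n, ?_⟩
    have : ∀ k ≥ n, S (∑ j ∈ Finset.range n, c j • (Pi.single j (1:ℝ) : ℕ → ℝ)) k = S c n := by
      intro k hk; rw [hST, min_eq_left hk]
    exact tendsto_const_nhds.congr' (eventually_atTop.2 ⟨n, fun k hk => (this k hk).symm⟩)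
  refine ⟨?_, ?_, ?_, ?_, ?_⟩
  · -- additive closure
    intro α hα β hβ
    obtain ⟨s, hs⟩ := (hmem α).1 hα
    obtain ⟨t, ht⟩ := (hmem β).1 hβ
    exact (hmem _).2 ⟨s + t, (hs.add ht).congr fun n => (hSadd α β n).symm⟩
  · -- scalar closure
    intro α hα c
    obtain ⟨s, hs⟩ := (hmem α).1 hα
    exact (hmem _).2 ⟨c • s, (hs.const_smul c).congr fun n => (hSsmul c α n).symm⟩
  · -- completeness
    intro a ha hcau
    -- coordinates are Cauchy
    have hcoord : ∀ j, ∃ L : ℝ, Tendsto (fun m => a m j) atTop (𝓝 L) := by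
      intro j
      refine cauchySeq_tendsto_of_complete (Metric.cauchySeq_iff.2 fun ε hε => ?_)
      obtain ⟨N, hN⟩ := hcau (ε * ‖x j‖ / 2) (by have := hxpos j; positivity)
      refine ⟨N, fun m hm n hn => ?_⟩
      have h1 : ‖(a m - a n) j • x j‖ ≤ 2 * q (a m - a n) :=
        hcd _ (hsubΛ _ (ha m) _ (ha n)) j
      have h2 : ‖(a m - a n) j • x j‖ = |a m j - a n j| * ‖x j‖ := by
        rw [norm_smul, Real.norm_eq_abs]; rfl
      have h3 : |a m j - a n j| * ‖x j‖ < ε * ‖x j‖ := by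
        rw [← h2]
        calc ‖(a m - a n) j • x j‖ ≤ 2 * q (a m - a n) := h1
          _ < 2 * (ε * ‖x j‖ / 2) := by
              have := hN m hm n hn; linarith
          _ = ε * ‖x j‖ := by ring
      rw [Real.dist_eq]
      exact lt_of_mul_lt_mul_right h3 (le_of_lt (hxpos j)) |>.trans_le le_rfl
    choose α hα using hcoord
    -- partial sums converge pointwise in k
    have hSconv : ∀ k, Tendsto (fun m => S (a m) k) atTop (𝓝 (S α k)) := by
      intro k
      exact tendsto_finset_sum _ fun j _ => (hα j).smul_const (x j)
    -- uniform closeness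
    have hunif : ∀ ε > (0:ℝ), ∃ N, ∀ m ≥ N, ∀ k, ‖S (a m) k - S α k‖ ≤ ε := by
      intro ε hε
      obtain ⟨N, hN⟩ := hcau ε hε
      refine ⟨N, fun m hm k => ?_⟩
      have hlim : Tendsto (fun n => ‖S (a m) k - S (a n) k‖) atTop
          (𝓝 ‖S (a m) k - S α k‖) := (tendsto_const_nhds.sub (hSconv k)).norm
      refine le_of_tendsto hlim (eventually_atTop.2 ⟨N, fun n hn => ?_⟩)
      have : ‖S (a m) k - S (a n) k‖ ≤ q (a m - a n) := by
        rw [← hSsub]; exact hle _ (hsubΛ _ (ha m) _ (ha n)) k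
      exact this.trans (le_of_lt (hN m hm n hn))
    -- α ∈ Λ
    have hαΛ : α ∈ Λ := by
      refine (hmem α).2 (cauchySeq_tendsto_of_complete (Metric.cauchySeq_iff.2
        fun ε hε => ?_))
      obtain ⟨N, hN⟩ := hunif (ε/4) (by positivity)
      obtain ⟨s, hs⟩ := (hmem _).1 (ha N)
      obtain ⟨M, hM⟩ := Metric.cauchySeq_iff.1 hs.cauchySeq (ε/4) (by positivity)
      refine ⟨M, fun k hk l hl => ?_⟩
      have h1 := hN N le_rfl k
      have h2 := hN N le_rfl l
      have h3 := hM k hk l hl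
      rw [dist_eq_norm] at h3 ⊢
      calc ‖S α k - S α l‖
          = ‖(S α k - S (a N) k) + (S (a N) k - S (a N) l) + (S (a N) l - S α l)‖ := by
            congr 1; abel
        _ ≤ ‖S α k - S (a N) k‖ + ‖S (a N) k - S (a N) l‖ + ‖S (a N) l - S α l‖ := by
            exact (norm_add_le _ _).trans (by gcongr; exact norm_add_le _ _)
        _ < ε := by
            rw [norm_sub_rev] at h1
            have := h1; have := h2; linarith [h1, h2, h3]
    refine ⟨α, hαΛ, ?_⟩
    rw [Metric.tendsto_atTop]
    intro ε hε
    obtain ⟨N, hN⟩ := hunif (ε/2) (by positivity)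
    refine ⟨N, fun m hm => ?_⟩
    rw [Real.dist_eq, sub_zero, abs_of_nonneg (hq0 _)]
    have : q (a m - α) ≤ ε/2 := by
      refine hqle _ _ (by positivity) fun k => ?_
      rw [hSsub]; exact hN m hm k
    linarith
  · -- expansion
    intro α hα
    obtain ⟨s, hs⟩ := (hmem α).1 hα
    rw [Metric.tendsto_atTop]
    intro ε hε
    obtain ⟨N, hN⟩ := Metric.cauchySeq_iff.1 hs.cauchySeq (ε/2) (by positivity)
    refine ⟨N, fun n hn => ?_⟩
    rw [Real.dist_eq, sub_zero, abs_of_nonneg (hq0 _)]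
    have hb : q (α - ∑ j ∈ Finset.range n, α j • (Pi.single j (1:ℝ) : ℕ → ℝ)) ≤ ε/2 := by
      refine hqle _ _ (by positivity) fun k => ?_
      rw [hSsub, hST]
      rcases le_or_gt k n with h | h
      · rw [min_eq_right h, sub_self, norm_zero]; positivity
      · rw [min_eq_left h.le]
        have := hN k (le_trans hn h.le) n hn
        rw [dist_eq_norm] at this
        exact this.le
    linarith
  · -- uniqueness
    intro α hα c hc
    funext j
    have hβΛ : ∀ n, (α - ∑ j ∈ Finset.range n, c j • (Pi.single j (1:ℝ) : ℕ → ℝ)) ∈ Λ :=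
      fun n => hsubΛ _ hα _ (hTΛ c n)
    have hbound : ∀ n > j, ‖(α j - c j) • x j‖ ≤
        2 * q (α - ∑ i ∈ Finset.range n, c i • (Pi.single i (1:ℝ) : ℕ → ℝ)) := by
      intro n hn
      have h1 := hcd _ (hβΛ n) j
      have h2 : (α - ∑ i ∈ Finset.range n, c i • (Pi.single i (1:ℝ) : ℕ → ℝ)) j
          = α j - c j := by
        have := hT c n j
        simp only [Pi.sub_apply, this, if_pos hn]
      rwa [h2] at h1
    have hzero : ‖(α j - c j) • x j‖ ≤ 0 := by
      have hlim : Tendsto (fun n => 2 * q (α - ∑ i ∈ Finset.range n,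
          c i • (Pi.single i (1:ℝ) : ℕ → ℝ))) atTop (𝓝 0) := by
        have := hc.const_mul 2
        simpa using this
      exact ge_of_tendsto hlim (eventually_atTop.2 ⟨j+1, fun n hn => hbound n (by omega)⟩)
    have : (α j - c j) • x j = 0 := norm_le_zero_iff.1 hzero
    rcases smul_eq_zero.1 this with h | h
    · linarith [sub_eq_zero.1 (by linarith [h] : α j - c j = 0)]
    · exact absurd h (hx j)
end

section
/- Let E be a Banach space. Then E admits an atomic decomposition if and only if E is isomorphic (as a topological vector space) to a complemented subspace of a Banach space possessing a Schauder basis. -/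
open Filter Topology

universe u

/-- A Banach space together with a Schauder basis: every element has a unique expansion
as a norm-convergent series in the basis vectors. -/
structure BanachWithBasis : Type (u + 1) where
  carrier : Type u
  [grp : NormedAddCommGroup carrier]
  [mod : NormedSpace ℝ carrier]
  [comp : CompleteSpace carrier]
  basis : ℕ → carrier
  basis_expansion : ∀ y : carrier, ∃! c : ℕ → ℝ,
    Filter.Tendsto (fun n => ∑ j ∈ Finset.range n, c j • basis j) Filter.atTop (nhds y)

attribute [instance] BanachWithBasis.grp BanachWithBasis.mod BanachWithBasis.comp

/-!
For a sequence `g` of nonzero vectors of a Banach space `X`, the coefficient sequences `c` for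
which `∑ c j • g j` converges form a Banach space under `sup n, ‖∑ j < n, c j • g j‖`, with the
unit vectors as a Schauder basis whose coefficient functionals are continuous: the `j`-th
coefficient is read off from the `j`-th increment of the partial sums.

If `(x', x)` is an atomic decomposition of `E`, take `g j = (x j, w j)` in `E × ℝ` with small
weights `w j > 0`: Banach–Steinhaus makes `v ↦ (x' j v)ⱼ` a bounded map into this space, and
summation followed by the first projection is a left inverse, so `E` is complemented in a space
with a basis. Conversely, if `f` is a Schauder basis of `F`, summation is a bijection from the space
built on `g = f` onto `F`, hence an isomorphism by the open mapping theorem; so the coefficient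
functionals of `f` are continuous and give an atomic decomposition of `F`, which passes to
complemented subspaces by composing with the projection.
-/

open BoundedContinuousFunction Finset

section AtomicDecomposition

variable (𝕜 : Type*) [NontriviallyNormedField 𝕜] (E : Type*) [NormedAddCommGroup E]
  [NormedSpace 𝕜 E]

def HasAtomicDecomposition : Prop :=
  ∃ (x' : ℕ → E →L[𝕜] 𝕜) (x : ℕ → E), ∀ v : E,
    Tendsto (fun n => ∑ j ∈ range n, x' j v • x j) atTop (𝓝 v)

variable {𝕜 E} {F : Type*} [NormedAddCommGroup F] [NormedSpace 𝕜 F]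

theorem HasAtomicDecomposition.of_leftInverse (h : HasAtomicDecomposition 𝕜 F)
    (T : E →L[𝕜] F) (S : F →L[𝕜] E) (hST : Function.LeftInverse S T) :
    HasAtomicDecomposition 𝕜 E := by
  obtain ⟨x', x, hx⟩ := h
  refine ⟨fun j => (x' j).comp T, fun j => S (x j), fun v => ?_⟩
  have := (S.continuous.tendsto (T v)).comp (hx (T v))
  rw [hST v] at this
  simpa [Function.comp_def, map_sum, map_smul] using this

theorem HasAtomicDecomposition.of_equiv_range (h : HasAtomicDecomposition 𝕜 F)
    (P : F →L[𝕜] F) (hP : ∀ w, P (P w) = P w)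
    (e : E ≃L[𝕜] LinearMap.range (P : F →ₗ[𝕜] F)) : HasAtomicDecomposition 𝕜 E := by
  let V := LinearMap.range (P : F →ₗ[𝕜] F)
  let Q : F →L[𝕜] V := P.codRestrict V fun w => LinearMap.mem_range_self _ w
  refine h.of_leftInverse (V.subtypeL.comp (e : E →L[𝕜] V)) ((e.symm : V →L[𝕜] E).comp Q)
    fun v => ?_
  obtain ⟨u, hu⟩ := (e v).2
  have hQ : Q (e v) = e v := Subtype.ext <| by
    change P (e v) = e v
    rw [← hu]
    exact hP u
  simp [hQ]

def equivRangeCompOfLeftInverse (T : E →L[𝕜] F) (S : F →L[𝕜] E)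
    (hST : Function.LeftInverse S T) :
    E ≃L[𝕜] LinearMap.range ((T.comp S : F →L[𝕜] F) : F →ₗ[𝕜] F) where
  toFun v := ⟨T v, T v, by simp [hST v]⟩
  invFun y := S y
  map_add' u v := Subtype.ext (map_add T u v)
  map_smul' c v := Subtype.ext (map_smul T c v)
  left_inv := hST
  right_inv := by
    rintro ⟨_, w, rfl⟩
    ext
    simp [hST (S w)]
  continuous_toFun := (T.continuous).subtype_mk _
  continuous_invFun := S.continuous.comp continuous_subtype_val

end AtomicDecomposition

theorem BoundedContinuousFunction.isClosed_setOf_cauchySeq {X : Type*} [PseudoMetricSpace X] :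
    IsClosed {s : ℕ →ᵇ X | CauchySeq s} := by
  refine isClosed_of_closure_subset fun s hs => Metric.cauchySeq_iff'.2 fun ε hε => ?_
  obtain ⟨t, ht, hst⟩ := Metric.mem_closure_iff.1 hs (ε / 3) (by positivity)
  obtain ⟨N, hN⟩ := Metric.cauchySeq_iff'.1 ht (ε / 3) (by positivity)
  refine ⟨N, fun n hn => ?_⟩
  calc dist (s n) (s N) ≤ dist (s n) (t n) + dist (t n) (t N) + dist (t N) (s N) :=
        dist_triangle4 _ _ _ _
    _ ≤ dist s t + dist (t n) (t N) + dist t s := by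
        gcongr
        · exact dist_coe_le_dist n
        · exact dist_coe_le_dist N
    _ < ε := by rw [dist_comm t s]; linarith [hN n hn]

section PartialSumSpace

variable (𝕜 : Type*) [NontriviallyNormedField 𝕜] {X : Type*} [NormedAddCommGroup X]
  [NormedSpace 𝕜 X]

/-- A coefficient sequence `c` for which `∑ c j • g j` converges is represented by its sequence
of partial sums. -/
def partialSumSpace (g : ℕ → X) : Submodule 𝕜 (ℕ →ᵇ X) where
  carrier := {s | s 0 = 0 ∧ (∀ n, s (n + 1) - s n ∈ 𝕜 ∙ g n) ∧ CauchySeq s}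
  add_mem' := by
    rintro s t ⟨hs0, hs, hsc⟩ ⟨ht0, ht, htc⟩
    refine ⟨by simp [hs0, ht0], fun n => ?_, hsc.add htc⟩
    simpa [add_sub_add_comm] using add_mem (hs n) (ht n)
  zero_mem' := ⟨rfl, fun n => by simp, cauchySeq_const 0⟩
  smul_mem' := by
    rintro c s ⟨hs0, hs, hsc⟩
    exact ⟨by simp [hs0], fun n => by simpa [smul_sub] using Submodule.smul_mem _ c (hs n),
      (uniformContinuous_const_smul c).comp_cauchySeq hsc⟩

variable {𝕜} {g : ℕ → X}

namespace partialSumSpace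

theorem mem_iff {s : ℕ →ᵇ X} :
    s ∈ partialSumSpace 𝕜 g ↔ s 0 = 0 ∧ (∀ n, s (n + 1) - s n ∈ 𝕜 ∙ g n) ∧ CauchySeq s :=
  Iff.rfl

theorem isClosed [CompleteSpace 𝕜] : IsClosed (partialSumSpace 𝕜 g : Set (ℕ →ᵇ X)) := by
  have h0 : IsClosed {s : ℕ →ᵇ X | s 0 = 0} := isClosed_eq (continuous_eval_const 0)
    continuous_const
  have hincr (n : ℕ) : IsClosed {s : ℕ →ᵇ X | s (n + 1) - s n ∈ 𝕜 ∙ g n} :=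
    (Submodule.closed_of_finiteDimensional _).preimage
      ((continuous_eval_const _).sub (continuous_eval_const _))
  convert h0.inter ((isClosed_iInter hincr).inter isClosed_setOf_cauchySeq) using 1
  ext s
  simp [mem_iff]

instance [CompleteSpace 𝕜] [CompleteSpace X] : CompleteSpace (partialSumSpace 𝕜 g) :=
  isClosed.completeSpace_coe

theorem exists_coeffs (s : partialSumSpace 𝕜 g) :
    ∃ c : ℕ → 𝕜, ∀ n, (s : ℕ →ᵇ X) n = ∑ j ∈ range n, c j • g j := by
  obtain ⟨hs0, hs, -⟩ := mem_iff.1 s.2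
  choose c hc using fun n => Submodule.mem_span_singleton.1 (hs n)
  refine ⟨c, fun n => ?_⟩
  induction n with
  | zero => simpa using hs0
  | succ n ih => rw [sum_range_succ, ← ih, hc n, add_sub_cancel]

def ofCoeffs (c : ℕ → 𝕜) (hc : CauchySeq fun n => ∑ j ∈ range n, c j • g j) :
    partialSumSpace 𝕜 g :=
  ⟨⟨⟨fun n => ∑ j ∈ range n, c j • g j, continuous_of_discreteTopology⟩,
      Metric.isBounded_range_iff.1 hc.isBounded_range⟩,
    by simp, fun n => by simp [sum_range_succ, Submodule.mem_span_singleton], hc⟩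

@[simp]
theorem ofCoeffs_apply (c : ℕ → 𝕜) (hc : CauchySeq fun n => ∑ j ∈ range n, c j • g j)
    (n : ℕ) : (ofCoeffs c hc : ℕ →ᵇ X) n = ∑ j ∈ range n, c j • g j :=
  rfl

variable (g) in
noncomputable def increment (n : ℕ) : partialSumSpace 𝕜 g →L[𝕜] X :=
  (evalCLM 𝕜 (n + 1) - evalCLM 𝕜 n : (ℕ →ᵇ X) →L[𝕜] X).comp (Submodule.subtypeL _)

@[simp]
theorem increment_apply (n : ℕ) (s : partialSumSpace 𝕜 g) :
    increment g n s = (s : ℕ →ᵇ X) (n + 1) - (s : ℕ →ᵇ X) n :=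
  rfl

variable (g) in
def basisVec (j : ℕ) : partialSumSpace 𝕜 g :=
  ofCoeffs (Pi.single j 1) <| by
    refine (tendsto_atTop_of_eventually_const (x := g j) (i₀ := j + 1) fun n hn => ?_)
      |>.cauchySeq
    simp [Pi.single_apply, show j < n by omega]

theorem basisVec_apply (j n : ℕ) :
    ((basisVec g j : partialSumSpace 𝕜 g) : ℕ →ᵇ X) n = if j < n then g j else 0 := by
  simp [basisVec, Pi.single_apply]

theorem sum_basisVec_apply (c : ℕ → 𝕜) (N m : ℕ) :
    ((∑ j ∈ range N, c j • basisVec g j : partialSumSpace 𝕜 g) : ℕ →ᵇ X) m =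
      ∑ j ∈ range (min N m), c j • g j := by
  simp only [Submodule.coe_sum, Submodule.coe_smul, BoundedContinuousFunction.sum_apply,
    BoundedContinuousFunction.smul_apply, basisVec_apply, smul_ite, smul_zero]
  rw [sum_ite, sum_const_zero, add_zero]
  congr 1
  ext j
  simp

theorem tendsto_sum_basisVec {s : partialSumSpace 𝕜 g} {c : ℕ → 𝕜}
    (hs : ∀ n, (s : ℕ →ᵇ X) n = ∑ j ∈ range n, c j • g j) :
    Tendsto (fun N => ∑ j ∈ range N, c j • basisVec g j) atTop (𝓝 s) := by
  refine Metric.tendsto_atTop.2 fun ε hε => ?_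
  obtain ⟨N, hN⟩ := Metric.cauchySeq_iff.1 (mem_iff.1 s.2).2.2 (ε / 2) (by positivity)
  refine ⟨N, fun n hn => ?_⟩
  suffices h : dist ((∑ j ∈ range n, c j • basisVec g j : partialSumSpace 𝕜 g) : ℕ →ᵇ X) s
      ≤ ε / 2 by
    exact h.trans_lt (by linarith)
  refine (dist_le (by positivity)).2 fun m => ?_
  rw [sum_basisVec_apply, ← hs]
  rcases le_total m n with h | h
  · simpa [min_eq_right h] using by positivity
  · exact (min_eq_left h ▸ hN n hn m (hn.trans h)).le

theorem increment_eq_of_tendsto {s : partialSumSpace 𝕜 g} {c : ℕ → 𝕜}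
    (h : Tendsto (fun N => ∑ j ∈ range N, c j • basisVec g j) atTop (𝓝 s)) (j : ℕ) :
    increment g j s = c j • g j := by
  refine tendsto_nhds_unique (((increment g j).continuous.tendsto s).comp h)
    (tendsto_atTop_of_eventually_const (i₀ := j + 1) fun N hN => ?_)
  rw [Function.comp_apply, increment_apply, sum_basisVec_apply, sum_basisVec_apply,
    min_eq_right hN, min_eq_right (by omega), sum_range_succ, add_sub_cancel_left]

section Limit

variable [CompleteSpace X]

noncomputable def limCLM : partialSumSpace 𝕜 g →L[𝕜] X :=
  LinearMap.mkContinuous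
    { toFun s := limUnder atTop (s : ℕ →ᵇ X)
      map_add' s t := tendsto_nhds_unique (mem_iff.1 (s + t).2).2.2.tendsto_limUnder
        ((mem_iff.1 s.2).2.2.tendsto_limUnder.add (mem_iff.1 t.2).2.2.tendsto_limUnder)
      map_smul' c s := tendsto_nhds_unique (mem_iff.1 (c • s).2).2.2.tendsto_limUnder
        ((mem_iff.1 s.2).2.2.tendsto_limUnder.const_smul c) }
    1 fun s => by
      simpa using le_of_tendsto (mem_iff.1 s.2).2.2.tendsto_limUnder.norm
        (Eventually.of_forall fun n => norm_coe_le_norm (s : ℕ →ᵇ X) n)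

theorem tendsto_limCLM (s : partialSumSpace 𝕜 g) :
    Tendsto (s : ℕ →ᵇ X) atTop (𝓝 (limCLM s)) :=
  (mem_iff.1 s.2).2.2.tendsto_limUnder

theorem limCLM_eq_of_tendsto {s : partialSumSpace 𝕜 g} {y : X}
    (h : Tendsto (s : ℕ →ᵇ X) atTop (𝓝 y)) : limCLM s = y :=
  tendsto_nhds_unique (tendsto_limCLM s) h

end Limit

theorem exists_continuousLinearMap_apply_eq_sum {E : Type*} [NormedAddCommGroup E]
    [NormedSpace 𝕜 E] [CompleteSpace E] (a : ℕ → E →L[𝕜] 𝕜)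
    (h : ∀ v, CauchySeq fun n => ∑ j ∈ range n, a j v • g j) :
    ∃ T : E →L[𝕜] partialSumSpace 𝕜 g,
      ∀ v n, (T v : ℕ →ᵇ X) n = ∑ j ∈ range n, a j v • g j := by
  let A (n : ℕ) : E →L[𝕜] X := ∑ j ∈ range n, (a j).smulRight (g j)
  have hA (n : ℕ) (v : E) : A n v = ∑ j ∈ range n, a j v • g j := by simp [A]
  obtain ⟨C, hC⟩ : ∃ C, ∀ n, ‖A n‖ ≤ C := banach_steinhaus fun v => by
    obtain ⟨R, hR⟩ := isBounded_iff_forall_norm_le.1 (h v).isBounded_range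
    exact ⟨R, fun n => hA n v ▸ hR _ ⟨n, rfl⟩⟩
  let T : E →ₗ[𝕜] partialSumSpace 𝕜 g :=
    { toFun v := ofCoeffs (fun j => a j v) (h v)
      map_add' u v := by ext n; simp [add_smul, sum_add_distrib]
      map_smul' c v := by ext n; simp [mul_smul, smul_sum] }
  refine ⟨T.mkContinuous C fun v => ?_, fun v n => rfl⟩
  have hC0 : 0 ≤ C := (norm_nonneg _).trans (hC 0)
  refine (norm_le (by positivity)).2 fun n => ?_
  calc ‖∑ j ∈ range n, a j v • g j‖ = ‖A n v‖ := by rw [hA]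
    _ ≤ ‖A n‖ * ‖v‖ := (A n).le_opNorm v
    _ ≤ C * ‖v‖ := by gcongr; exact hC n

end partialSumSpace

end PartialSumSpace

theorem partialSumSpace.hasAtomicDecomposition {𝕜 : Type*} [RCLike 𝕜] {X : Type*}
    [NormedAddCommGroup X] [NormedSpace 𝕜 X] {g : ℕ → X} (hg : ∀ n, g n ≠ 0) :
    HasAtomicDecomposition 𝕜 (partialSumSpace 𝕜 g) := by
  choose ψ hψ using fun n => SeparatingDual.exists_eq_one (R := 𝕜) (hg n)
  refine ⟨fun j => (ψ j).comp (increment g j), basisVec g, fun s => ?_⟩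
  obtain ⟨c, hc⟩ := exists_coeffs s
  have hs := tendsto_sum_basisVec hc
  convert hs using 4 with N j
  simp [increment_eq_of_tendsto hs, hψ]

noncomputable def partialSumSpace.banachWithBasis {X : Type u} [NormedAddCommGroup X]
    [NormedSpace ℝ X] [CompleteSpace X] (g : ℕ → X) (hg : ∀ n, g n ≠ 0) :
    BanachWithBasis.{u} where
  carrier := partialSumSpace ℝ g
  basis := basisVec g
  basis_expansion s := by
    obtain ⟨c, hc⟩ := exists_coeffs s
    refine ⟨c, tendsto_sum_basisVec hc, fun d hd => funext fun j => ?_⟩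
    refine smul_left_injective ℝ (hg j) (?_ : d j • g j = c j • g j)
    rw [← increment_eq_of_tendsto hd, ← increment_eq_of_tendsto (tendsto_sum_basisVec hc)]

namespace BanachWithBasis

variable (F : BanachWithBasis.{u})

theorem eq_zero_of_tendsto_zero {c : ℕ → ℝ}
    (hc : Tendsto (fun n => ∑ j ∈ range n, c j • F.basis j) atTop (𝓝 0)) : c = 0 :=
  (F.basis_expansion 0).unique hc (by simp)

theorem basis_ne_zero (j : ℕ) : F.basis j ≠ 0 := fun hj => by
  have h := F.eq_zero_of_tendsto_zero (c := Pi.single j 1) (by simp [Pi.single_apply, hj])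
  simpa using congrFun h j

theorem limCLM_bijective :
    Function.Bijective (partialSumSpace.limCLM (𝕜 := ℝ) (g := F.basis)) := by
  refine ⟨(injective_iff_map_eq_zero _).2 fun s hs => ?_, fun y => ?_⟩
  · obtain ⟨c, hsc⟩ := partialSumSpace.exists_coeffs s
    have hc : c = 0 := F.eq_zero_of_tendsto_zero <|
      hs ▸ (partialSumSpace.tendsto_limCLM s).congr hsc
    ext n
    simp [hsc, hc]
  · obtain ⟨c, hc, -⟩ := F.basis_expansion y
    exact ⟨partialSumSpace.ofCoeffs c hc.cauchySeq, partialSumSpace.limCLM_eq_of_tendsto hc⟩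

theorem hasAtomicDecomposition : HasAtomicDecomposition ℝ F.carrier := by
  let R := ContinuousLinearEquiv.ofBijective (partialSumSpace.limCLM (𝕜 := ℝ) (g := F.basis))
    (LinearMap.ker_eq_bot.2 F.limCLM_bijective.1)
    (LinearMap.range_eq_top.2 F.limCLM_bijective.2)
  exact (partialSumSpace.hasAtomicDecomposition F.basis_ne_zero).of_leftInverse
    (R.symm : F.carrier →L[ℝ] _) (R : _ →L[ℝ] F.carrier) fun y => R.apply_symm_apply y

end BanachWithBasis

theorem exists_pos_summable_apply_mul {E : Type*} [SeminormedAddCommGroup E]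
    [NormedSpace ℝ E] (x' : ℕ → E →L[ℝ] ℝ) :
    ∃ w : ℕ → ℝ, (∀ j, 0 < w j) ∧ ∀ v, Summable fun j => x' j v * w j := by
  refine ⟨fun j => ((1 + ‖x' j‖) * 2 ^ j)⁻¹, fun j => by positivity, fun v => ?_⟩
  refine Summable.of_norm_bounded (summable_geometric_two.mul_left ‖v‖) fun j => ?_
  have hx' : ‖x' j v‖ ≤ (1 + ‖x' j‖) * ‖v‖ :=
    (x' j).le_opNorm v |>.trans (by gcongr; linarith)
  calc ‖x' j v * ((1 + ‖x' j‖) * 2 ^ j)⁻¹‖ = ‖x' j v‖ * ((1 + ‖x' j‖) * 2 ^ j)⁻¹ := by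
        rw [norm_mul, norm_inv, Real.norm_of_nonneg (r := (1 + ‖x' j‖) * 2 ^ j)
          (by positivity)]
    _ ≤ (1 + ‖x' j‖) * ‖v‖ * ((1 + ‖x' j‖) * 2 ^ j)⁻¹ := by gcongr
    _ = ‖v‖ * (1 / 2) ^ j := by rw [one_div, inv_pow]; field_simp

theorem HasAtomicDecomposition.exists_leftInverse_partialSumSpace {E : Type*}
    [NormedAddCommGroup E] [NormedSpace ℝ E] [CompleteSpace E]
    (h : HasAtomicDecomposition ℝ E) :
    ∃ (g : ℕ → E × ℝ) (_ : ∀ n, g n ≠ 0) (T : E →L[ℝ] partialSumSpace ℝ g)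
      (S : partialSumSpace ℝ g →L[ℝ] E), Function.LeftInverse S T := by
  obtain ⟨x', x, hx⟩ := h
  obtain ⟨w, hw, hsum⟩ := exists_pos_summable_apply_mul x'
  -- The second coordinate makes every `g j` nonzero and keeps `∑ x' j v • g j` convergent.
  let g (j : ℕ) : E × ℝ := (x j, w j)
  have hg : ∀ j, g j ≠ 0 := fun j hj => (hw j).ne' (congrArg Prod.snd hj)
  have hconv (v : E) : Tendsto (fun n => ∑ j ∈ range n, x' j v • g j) atTop
      (𝓝 (v, ∑' j, x' j v * w j)) := by
    convert (hx v).prodMk_nhds (hsum v).hasSum.tendsto_sum_nat using 1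
    ext n <;> simp [g, Prod.fst_sum, Prod.snd_sum]
  obtain ⟨T, hT⟩ := partialSumSpace.exists_continuousLinearMap_apply_eq_sum x'
    fun v => (hconv v).cauchySeq
  refine ⟨g, hg, T, (ContinuousLinearMap.fst ℝ E ℝ).comp partialSumSpace.limCLM, fun v => ?_⟩
  have hTv : partialSumSpace.limCLM (T v) = (v, ∑' j, x' j v * w j) :=
    partialSumSpace.limCLM_eq_of_tendsto ((hconv v).congr fun n => (hT v n).symm)
  simp [hTv]

/-- A Banach space admits an atomic decomposition iff it is isomorphic to a complemented
subspace of a Banach space with a Schauder basis. -/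
theorem stmt2 {E : Type u} [NormedAddCommGroup E] [NormedSpace ℝ E] [CompleteSpace E] :
    (∃ (x' : ℕ → E →L[ℝ] ℝ) (x : ℕ → E), ∀ v : E,
        Tendsto (fun n => ∑ j ∈ Finset.range n, x' j v • x j) atTop (𝓝 v)) ↔
    (∃ (F : BanachWithBasis.{u}) (P : F.carrier →L[ℝ] F.carrier),
        (∀ w, P (P w) = P w) ∧
        Nonempty (E ≃L[ℝ] LinearMap.range (P : F.carrier →ₗ[ℝ] F.carrier))) := by
  constructor
  · intro h
    obtain ⟨g, hg, T, S, hST⟩ := HasAtomicDecomposition.exists_leftInverse_partialSumSpace h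
    exact ⟨partialSumSpace.banachWithBasis g hg, T.comp S, fun w => congrArg T (hST (S w)),
      ⟨equivRangeCompOfLeftInverse T S hST⟩⟩
  · rintro ⟨F, P, hP, ⟨e⟩⟩
    exact F.hasAtomicDecomposition.of_equiv_range P hP e
end

section
/- Let E be a Banach space, let ({x_j'}, {x_j}) be an atomic decomposition of E, and let (y_j)_j be a sequence in E such that there is a constant C < 1 with ∑_{j=1}^∞ |x_j'(x)| · ‖x_j − y_j‖ ≤ C·‖x‖ for every x ∈ E. Then there exists a sequence (y_j')_j in E' such that ({y_j'}, {y_j}) is an atomic decomposition of E. -/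
open Filter Topology

/-- Perturbation of an atomic decomposition: if `(y_j)` is close to `(x_j)` in the sense that
`∑_j |x_j'(x)| ‖x_j - y_j‖ ≤ C ‖x‖` with `C < 1`, then `(y_j)` carries an atomic
decomposition with suitable coefficient functionals. -/
theorem stmt3 {E : Type*} [NormedAddCommGroup E] [NormedSpace ℝ E] [CompleteSpace E]
    (x' : ℕ → E →L[ℝ] ℝ) (x y : ℕ → E)
    (had : ∀ v : E, Tendsto (fun n => ∑ j ∈ Finset.range n, x' j v • x j) atTop (𝓝 v))
    (C : ℝ) (hC : C < 1)
    (hsumm : ∀ v : E, Summable fun j => |x' j v| * ‖x j - y j‖)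
    (hbound : ∀ v : E, ∑' j, |x' j v| * ‖x j - y j‖ ≤ C * ‖v‖) :
    ∃ y' : ℕ → E →L[ℝ] ℝ, ∀ v : E,
      Tendsto (fun n => ∑ j ∈ Finset.range n, y' j v • y j) atTop (𝓝 v) := by
  have hnorm : ∀ v j, ‖x' j v • (x j - y j)‖ = |x' j v| * ‖x j - y j‖ := by
    intro v j
    rw [norm_smul, Real.norm_eq_abs]
  have hsum' : ∀ v : E, Summable (fun j => x' j v • (x j - y j)) := by
    intro v
    apply Summable.of_norm
    simpa only [hnorm v] using hsumm v
  -- the perturbation operator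
  set Sfun : E → E := fun v => ∑' j, x' j v • (x j - y j) with hSfun
  have Slin : IsLinearMap ℝ Sfun := by
    constructor
    · intro v w
      simp only [hSfun]
      rw [← Summable.tsum_add (hsum' v) (hsum' w)]
      congr 1
      ext j
      rw [map_add, add_smul]
    · intro c v
      simp only [hSfun]
      rw [← Summable.tsum_const_smul c (hsum' v)]
      congr 1
      ext j
      rw [map_smul, smul_eq_mul, smul_smul]
  have hSbound : ∀ v : E, ‖Sfun v‖ ≤ max C 0 * ‖v‖ := by
    intro v
    calc ‖Sfun v‖ ≤ ∑' j, ‖x' j v • (x j - y j)‖ := norm_tsum_le_tsum_norm (by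
            simpa only [hnorm v] using hsumm v)
      _ = ∑' j, |x' j v| * ‖x j - y j‖ := by simp only [hnorm v]
      _ ≤ C * ‖v‖ := hbound v
      _ ≤ max C 0 * ‖v‖ := by
          apply mul_le_mul_of_nonneg_right (le_max_left _ _) (norm_nonneg _)
  set S : E →L[ℝ] E := (Slin.mk' Sfun).mkContinuous (max C 0) hSbound with hS
  have hSnorm : ‖S‖ < 1 := by
    calc ‖S‖ ≤ max C 0 := LinearMap.mkContinuous_norm_le _ (le_max_right _ _) _
      _ < 1 := max_lt hC one_pos
  set u : (E →L[ℝ] E)ˣ := Units.oneSub S hSnorm with hu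
  refine ⟨fun j => (x' j).comp (u⁻¹).val, fun v => ?_⟩
  set w : E := (u⁻¹).val v with hw
  have key : ∀ j, x' j w • y j = x' j w • x j - x' j w • (x j - y j) := by
    intro j
    rw [smul_sub]
    abel
  have hSw : Tendsto (fun n => ∑ j ∈ Finset.range n, x' j w • (x j - y j)) atTop (𝓝 (S w)) := by
    have : HasSum (fun j => x' j w • (x j - y j)) (S w) := (hsum' w).hasSum
    exact this.tendsto_sum_nat
  have hcomb : Tendsto (fun n => ∑ j ∈ Finset.range n, x' j w • y j) atTop (𝓝 (w - S w)) := by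
    have := (had w).sub hSw
    simpa only [← Finset.sum_sub_distrib, ← key] using this
  have hval : w - S w = v := by
    have : u.val w = v := by
      rw [hw, ← ContinuousLinearMap.comp_apply, ← ContinuousLinearMap.mul_def,
        u.mul_inv, ContinuousLinearMap.one_apply]
    rw [← this, hu]
    simp [ContinuousLinearMap.sub_apply]
  simpa only [ContinuousLinearMap.comp_apply, ← hw, hval] using hcomb
end

section
/- Let E be a Banach space, let ({x_j'}, {x_j}) be an atomic decomposition of E, and let (y_j')_j be a sequence in E' such that there is a constant C < 1 with ∑_{j=1}^∞ |(x_j' − y_j')(x)| · ‖x_j‖ ≤ C·‖x‖ for every x ∈ E. Then there exists a sequence (y_j)_j in E such that ({y_j'}, {y_j}) is an atomic decomposition of E. -/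
/-!
With `dⱼ = xⱼ' - yⱼ'`, the hypothesis makes `S v = ∑ⱼ dⱼ(v) xⱼ` a bounded operator of norm
at most `C < 1`, and `∑ⱼ yⱼ'(v) xⱼ = v - S v`. Since `1 - S` is invertible (Neumann series),
`yⱼ = (1 - S)⁻¹ xⱼ` turns the expansion of `(1 - S) v` into one of `v`.
-/

open Filter Topology

namespace AtomicDecomposition

variable {𝕜 E F : Type*} [NontriviallyNormedField 𝕜]
  [NormedAddCommGroup E] [NormedSpace 𝕜 E] [NormedAddCommGroup F] [NormedSpace 𝕜 F]

def IsAtomicDecomposition (f : ℕ → E →L[𝕜] 𝕜) (x : ℕ → E) : Prop :=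
  ∀ v : E, Tendsto (fun n => ∑ j ∈ Finset.range n, f j v • x j) atTop (𝓝 v)

theorem exists_clm_hasSum_smul [CompleteSpace F] {ι : Type*} (d : ι → E →L[𝕜] 𝕜) (x : ι → F)
    (C : ℝ) (hsumm : ∀ v : E, Summable fun j => ‖d j v‖ * ‖x j‖)
    (hbound : ∀ v : E, ∑' j, ‖d j v‖ * ‖x j‖ ≤ C * ‖v‖) :
    ∃ S : E →L[𝕜] F, ∀ v : E, HasSum (fun j => d j v • x j) (S v) ∧ ‖S v‖ ≤ C * ‖v‖ := by
  have hsumm' (v : E) : Summable fun j => d j v • x j :=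
    .of_norm (by simpa only [norm_smul] using hsumm v)
  have hnorm (v : E) : ‖∑' j, d j v • x j‖ ≤ C * ‖v‖ :=
    calc ‖∑' j, d j v • x j‖ ≤ ∑' j, ‖d j v • x j‖ :=
          norm_tsum_le_tsum_norm (by simpa only [norm_smul] using hsumm v)
      _ = ∑' j, ‖d j v‖ * ‖x j‖ := by simp only [norm_smul]
      _ ≤ C * ‖v‖ := hbound v
  let S : E →ₗ[𝕜] F :=
    { toFun := fun v => ∑' j, d j v • x j
      map_add' := fun v w => by
        simp only [map_add, add_smul]
        exact (hsumm' v).tsum_add (hsumm' w)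
      map_smul' := fun c v => by
        simp only [map_smul, smul_eq_mul, mul_smul, RingHom.id_apply]
        exact (hsumm' v).tsum_const_smul c }
  exact ⟨S.mkContinuous C hnorm, fun v => ⟨(hsumm' v).hasSum, hnorm v⟩⟩

theorem opNorm_lt_one_of_le_mul {S : E →L[𝕜] F} {C : ℝ} (hC : C < 1)
    (hS : ∀ v : E, ‖S v‖ ≤ C * ‖v‖) : ‖S‖ < 1 :=
  (S.opNorm_le_bound (le_max_right C 0) fun v =>
    (hS v).trans (mul_le_mul_of_nonneg_right (le_max_left C 0) (norm_nonneg v))).trans_lt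
    (max_lt hC one_pos)

theorem isAtomicDecomposition_map_inv (y' : ℕ → E →L[𝕜] 𝕜) (x : ℕ → E) (u : (E →L[𝕜] E)ˣ)
    (hu : ∀ v : E, Tendsto (fun n => ∑ j ∈ Finset.range n, y' j v • x j) atTop (𝓝 (u.1 v))) :
    IsAtomicDecomposition y' fun j => (↑u⁻¹ : E →L[𝕜] E) (x j) := by
  intro v
  have h := ((↑u⁻¹ : E →L[𝕜] E).continuous.tendsto _).comp (hu v)
  have hinv : (↑u⁻¹ : E →L[𝕜] E) (u.1 v) = v := by
    rw [← mul_apply_eq_comp, u.inv_mul, one_apply_eq_self]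
  rw [hinv] at h
  simpa only [Function.comp_def, map_sum, map_smul] using h

theorem tendsto_sum_smul_of_hasSum_sub {f g : ℕ → E →L[𝕜] 𝕜} {x : ℕ → E}
    (hf : IsAtomicDecomposition f x) {S : E →L[𝕜] E}
    (hS : ∀ v : E, HasSum (fun j => (f j - g j) v • x j) (S v)) (v : E) :
    Tendsto (fun n => ∑ j ∈ Finset.range n, g j v • x j) atTop (𝓝 (v - S v)) := by
  have h := (hf v).sub (hS v).tendsto_sum_nat
  simpa only [← Finset.sum_sub_distrib, sub_apply, sub_smul, sub_sub_cancel] using h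

end AtomicDecomposition

open AtomicDecomposition in
/-- Perturbation of an atomic decomposition: if `(y_j')` is close to `(x_j')` in the sense
that `∑_j |(x_j' - y_j')(x)| ‖x_j‖ ≤ C ‖x‖` with `C < 1`, then `(y_j')` is the sequence of
coefficient functionals of an atomic decomposition with suitable vectors `(y_j)`. -/
theorem stmt4 {E : Type*} [NormedAddCommGroup E] [NormedSpace ℝ E] [CompleteSpace E]
    (x' y' : ℕ → E →L[ℝ] ℝ) (x : ℕ → E)
    (had : ∀ v : E, Tendsto (fun n => ∑ j ∈ Finset.range n, x' j v • x j) atTop (𝓝 v))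
    (C : ℝ) (hC : C < 1)
    (hsumm : ∀ v : E, Summable fun j => |(x' j - y' j) v| * ‖x j‖)
    (hbound : ∀ v : E, ∑' j, |(x' j - y' j) v| * ‖x j‖ ≤ C * ‖v‖) :
    ∃ y : ℕ → E, ∀ v : E,
      Tendsto (fun n => ∑ j ∈ Finset.range n, y' j v • y j) atTop (𝓝 v) := by
  obtain ⟨S, hS⟩ := exists_clm_hasSum_smul (fun j => x' j - y' j) x C hsumm hbound
  let u := Units.oneSub S (opNorm_lt_one_of_le_mul hC fun v => (hS v).2)
  refine ⟨_, isAtomicDecomposition_map_inv y' x u fun v => ?_⟩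
  simpa only [u, Units.val_oneSub, sub_apply, one_apply_eq_self]
    using tendsto_sum_smul_of_hasSum_sub had (fun v => (hS v).1) v
end

section
/- Let E be a Banach space with atomic decomposition ({x_j'}, {x_j}). Define T_n(x) := ∑_{j=n+1}^∞ x_j'(x) x_j. The following are equivalent: (1) ({x_j}, {x_j'}) is an atomic decomposition of the dual E' with its norm topology (i.e. x' = ∑_j x'(x_j) x_j' in norm for every x' ∈ E'); (2) for every x' ∈ E', the series ∑_j x'(x_j) x_j' converges in the norm of E'; (3) for every x' ∈ E', ‖x' ∘ T_n‖ → 0 as n → ∞ (the decomposition is shrinking). -/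
open Filter Topology

lemma key_eq {E : Type*} [NormedAddCommGroup E] [NormedSpace ℝ E]
    (f : ℕ → E →L[ℝ] ℝ) (v : ℕ → E) (u : E →L[ℝ] ℝ) (n : ℕ) :
    u.comp (ContinuousLinearMap.id ℝ E -
        ∑ j ∈ Finset.range n, (f j).smulRight (v j)) =
      u - ∑ j ∈ Finset.range n, u (v j) • f j := by
  ext x
  simp [ContinuousLinearMap.sum_apply, map_sum, mul_comm]

/-- For an atomic decomposition `({x_j'}, {x_j})` of a Banach space `E`, TFAE:
(1) `({x_j}, {x_j'})` is an atomic decomposition of `E'` with the norm topology;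
(2) for every `x' ∈ E'` the series `∑_j x'(x_j) x_j'` converges in `E'`;
(3) the decomposition is shrinking: `‖x' ∘ T_n‖ → 0` where `T_n x = ∑_{j>n} x_j'(x) x_j`. -/
theorem stmt6 {E : Type*} [NormedAddCommGroup E] [NormedSpace ℝ E] [CompleteSpace E]
    (f : ℕ → E →L[ℝ] ℝ) (v : ℕ → E)
    (had : ∀ x : E, Tendsto (fun n => ∑ j ∈ Finset.range n, f j x • v j) atTop (𝓝 x)) :
    List.TFAE
      [∀ u : E →L[ℝ] ℝ,
          Tendsto (fun n => ∑ j ∈ Finset.range n, u (v j) • f j) atTop (𝓝 u),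
        ∀ u : E →L[ℝ] ℝ, ∃ w : E →L[ℝ] ℝ,
          Tendsto (fun n => ∑ j ∈ Finset.range n, u (v j) • f j) atTop (𝓝 w),
        ∀ u : E →L[ℝ] ℝ,
          Tendsto (fun n =>
              ‖u.comp (ContinuousLinearMap.id ℝ E -
                ∑ j ∈ Finset.range n, (f j).smulRight (v j))‖) atTop (𝓝 0)] := by
  tfae_have 1 → 2 := fun h u => ⟨u, h u⟩
  tfae_have 2 → 1 := by
    intro h u
    obtain ⟨w, hw⟩ := h u
    suffices hwu : w = u by rwa [hwu] at hw
    ext x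
    have h1 : Tendsto (fun n => (∑ j ∈ Finset.range n, u (v j) • f j) x) atTop (𝓝 (w x)) :=
      ((ContinuousLinearMap.apply ℝ ℝ x).continuous.tendsto w).comp hw
    have h2 : Tendsto (fun n => (∑ j ∈ Finset.range n, u (v j) • f j) x) atTop (𝓝 (u x)) := by
      have := (u.continuous.tendsto x).comp (had x)
      convert this using 2 with n
      simp [ContinuousLinearMap.sum_apply, map_sum, mul_comm]
    exact tendsto_nhds_unique h1 h2
  tfae_have 1 → 3 := by
    intro h u
    have := (tendsto_iff_norm_sub_tendsto_zero.mp (h u))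
    convert this using 2 with n
    rw [key_eq, ← norm_neg]
    congr 1
    abel
  tfae_have 3 → 1 := by
    intro h u
    rw [tendsto_iff_norm_sub_tendsto_zero]
    convert h u using 2 with n
    rw [key_eq, ← norm_neg]
    congr 1
    abel
  tfae_finish
end

section
/- Let E be a Banach space with a Schauder basis (e_j)_j and coefficient functionals (e_j')_j. The basis (e_j)_j is boundedly complete (i.e. for every scalar sequence (α_j), boundedness of the partial sums (∑_{j=1}^k α_j e_j)_k implies convergence of ∑_j α_j e_j in E) if and only if the atomic decomposition ({e_j'}, {e_j}) is boundedly complete (i.e. for every x'' ∈ E'', the series ∑_j x''(e_j') e_j converges in E). -/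
/-!
For `x''` in the bidual, testing the partial sum `∑_{j<n} x''(e_j') e_j` against `f ∈ E'` gives
`x''(f ∘ P_n)`, where `P_n` is the `n`-th basis projection; so its norm is at most `‖x''‖ ‖P_n‖`,
and the `P_n` are uniformly bounded by Banach–Steinhaus. Conversely, if the partial sums of
`∑ α_j e_j` are bounded, a weak* cluster point `x''` of their images in `E''` (Banach–Alaoglu)
satisfies `x''(e_j') = α_j`, because `e_j'` of the `n`-th partial sum is `α_j` for `n > j`.
-/

open Filter Topology

namespace SchauderBasis

section

variable {𝕜 X : Type*} [NontriviallyNormedField 𝕜] [NormedAddCommGroup X] [NormedSpace 𝕜 X]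

def ofTendsto (e : ℕ → X) (e' : ℕ → StrongDual 𝕜 X)
    (hexp : ∀ x, Tendsto (fun n => ∑ j ∈ Finset.range n, e' j x • e j) atTop (𝓝 x))
    (hbiorth : ∀ i j, e' j (e i) = if i = j then (1 : 𝕜) else 0) : SchauderBasis 𝕜 X where
  basis := e
  coord := e'
  ortho i j := by simp [hbiorth, Pi.single_apply, eq_comm]
  expansion x := by
    rw [HasSum, SummationFilter.conditional_filter_eq_map_range, tendsto_map'_iff]
    exact hexp x

theorem coord_sum_smul (b : SchauderBasis 𝕜 X) (α : ℕ → 𝕜) {i n : ℕ} (hin : i < n) :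
    b.coord i (∑ j ∈ Finset.range n, α j • b j) = α i := by
  simp [b.ortho, Pi.single_apply, hin]

theorem apply_sum_bidual_smul (b : SchauderBasis 𝕜 X) (x'' : StrongDual 𝕜 (StrongDual 𝕜 X))
    (f : StrongDual 𝕜 X) (n : ℕ) :
    f (∑ j ∈ Finset.range n, x'' (b.coord j) • b j) = x'' (f.comp (b.proj n)) := by
  have hcomp : f.comp (b.proj n) = ∑ j ∈ Finset.range n, f (b j) • b.coord j := by
    ext x
    simp [mul_comm]
  simp [hcomp, mul_comm]

end

variable {𝕜 X : Type*} [RCLike 𝕜] [NormedAddCommGroup X] [NormedSpace 𝕜 X]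

theorem norm_sum_bidual_smul_le (b : SchauderBasis 𝕜 X)
    (x'' : StrongDual 𝕜 (StrongDual 𝕜 X)) (n : ℕ) :
    ‖∑ j ∈ Finset.range n, x'' (b.coord j) • b j‖ ≤ ‖x''‖ * ‖b.proj n‖ := by
  refine NormedSpace.norm_le_dual_bound 𝕜 _ (by positivity) fun f => ?_
  calc ‖f (∑ j ∈ Finset.range n, x'' (b.coord j) • b j)‖
      = ‖x'' (f.comp (b.proj n))‖ := by rw [b.apply_sum_bidual_smul]
    _ ≤ ‖x''‖ * (‖f‖ * ‖b.proj n‖) := by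
      grw [x''.le_opNorm, f.opNorm_comp_le]
    _ = ‖x''‖ * ‖b.proj n‖ * ‖f‖ := by ring

end SchauderBasis

theorem NormedSpace.exists_bidual_apply_eq_of_tendsto {𝕜 X ι : Type*} [RCLike 𝕜]
    [NormedAddCommGroup X] [NormedSpace 𝕜 X] {l : Filter ι} [l.NeBot] {s : ι → X} {M : ℝ}
    (hs : ∀ i, ‖s i‖ ≤ M) :
    ∃ x'' : StrongDual 𝕜 (StrongDual 𝕜 X),
      ∀ f c, Tendsto (fun i => f (s i)) l (𝓝 c) → x'' f = c := by
  let u : ι → WeakDual 𝕜 (StrongDual 𝕜 X) := fun i =>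
    StrongDual.toWeakDual (inclusionInDoubleDual 𝕜 X (s i))
  have hu : ∀ i, u i ∈ WeakDual.toStrongDual ⁻¹' Metric.closedBall 0 M := fun i => by
    rw [Set.mem_preimage, Metric.mem_closedBall]
    refine (dist_zero_right (WeakDual.toStrongDual (u i))).trans_le ?_
    exact (double_dual_bound 𝕜 X (s i)).trans (hs i)
  obtain ⟨x'', -, hx''⟩ :=
    (WeakDual.isCompact_closedBall (0 : StrongDual 𝕜 (StrongDual 𝕜 X)) M).exists_mapClusterPt
      (le_principal_iff.mpr (Eventually.of_forall (f := l) hu))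
  refine ⟨WeakDual.toStrongDual x'', fun f c hc => ?_⟩
  have hf : MapClusterPt (x'' f) l ((fun y : WeakDual 𝕜 (StrongDual 𝕜 X) => y f) ∘ u) :=
    hx''.tendsto_comp ((WeakDual.eval_continuous f).tendsto x'')
  exact eq_of_nhds_neBot ((mapClusterPt_def.mp hf).mono hc)

/-- A Schauder basis `(e_j)` of a Banach space `E`, with coefficient functionals `(e_j')`,
is boundedly complete iff the atomic decomposition `({e_j'}, {e_j})` is boundedly
complete, i.e. `∑_j x''(e_j') e_j` converges in `E` for every `x''` in the bidual. -/
theorem stmt7 {E : Type*} [NormedAddCommGroup E] [NormedSpace ℝ E] [CompleteSpace E]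
    (e : ℕ → E) (e' : ℕ → E →L[ℝ] ℝ)
    (hexp : ∀ x : E, Tendsto (fun n => ∑ j ∈ Finset.range n, e' j x • e j) atTop (𝓝 x))
    (hbiorth : ∀ i j, e' j (e i) = if i = j then (1 : ℝ) else 0) :
    (∀ α : ℕ → ℝ,
        (∃ M : ℝ, ∀ k : ℕ, ‖∑ j ∈ Finset.range k, α j • e j‖ ≤ M) →
        ∃ s : E, Tendsto (fun n => ∑ j ∈ Finset.range n, α j • e j) atTop (𝓝 s)) ↔
    (∀ x'' : (E →L[ℝ] ℝ) →L[ℝ] ℝ,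
        ∃ s : E, Tendsto (fun n => ∑ j ∈ Finset.range n, x'' (e' j) • e j) atTop (𝓝 s)) := by
  let b := SchauderBasis.ofTendsto e e' hexp hbiorth
  constructor
  · intro h x''
    obtain ⟨C, hC⟩ := b.exists_norm_proj_le
    exact h _ ⟨‖x''‖ * C, fun n => (b.norm_sum_bidual_smul_le x'' n).trans (by gcongr; exact hC n)⟩
  · rintro h α ⟨M, hM⟩
    obtain ⟨x'', hx''⟩ := NormedSpace.exists_bidual_apply_eq_of_tendsto (𝕜 := ℝ) (l := atTop) hM
    have hcoord : ∀ j, x'' (e' j) = α j := fun j =>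
      hx'' _ _ (tendsto_atTop_of_eventually_const (i₀ := j + 1) fun n hn =>
        b.coord_sum_smul α (Nat.lt_of_succ_le hn))
    simpa only [hcoord] using h x''
end

section
/- Let E be a Banach space with an atomic decomposition ({x_j'}, {x_j}) that is boundedly complete, i.e. ∑_j x''(x_j') x_j converges in E for every x'' ∈ E''. Then E is complemented in its bidual E''; in fact, the map P : E'' → E, P(x'') := ∑_j x''(x_j') x_j, is a continuous linear projection onto E (identifying E with its canonical image in E''). -/
/-!
The partial-sum operators `x'' ↦ ∑_{j<n} x''(x_j') x_j` are continuous on the Banach space `E''`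
and, by bounded completeness, converge pointwise; Banach–Steinhaus makes the limit `P`
continuous. On `J x` these partial sums are those of the atomic decomposition, so `P (J x) = x`.
-/

open Filter Topology

theorem exists_continuousLinearMap_tendsto_sum_smul {𝕜 X E : Type*}
    [NontriviallyNormedField 𝕜]
    [AddCommGroup X] [Module 𝕜 X] [UniformSpace X] [IsUniformAddGroup X] [ContinuousSMul 𝕜 X]
    [BarrelledSpace 𝕜 X] [NormedAddCommGroup E] [NormedSpace 𝕜 E]
    (a : ℕ → X →L[𝕜] 𝕜) (v : ℕ → E)
    (h : ∀ x, ∃ s, Tendsto (fun n => ∑ j ∈ Finset.range n, a j x • v j) atTop (𝓝 s)) :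
    ∃ P : X →L[𝕜] E,
      ∀ x, Tendsto (fun n => ∑ j ∈ Finset.range n, a j x • v j) atTop (𝓝 (P x)) := by
  choose s hs using h
  have hpartial : Tendsto (fun n x => (∑ j ∈ Finset.range n, (a j).smulRight (v j)) x) atTop
      (𝓝 s) :=
    tendsto_pi_nhds.2 fun x => by simpa using hs x
  exact ⟨continuousLinearMapOfTendsto _ hpartial, hs⟩

theorem stmt8_general {E : Type*} [NormedAddCommGroup E] [NormedSpace ℝ E]
    (f : ℕ → E →L[ℝ] ℝ) (v : ℕ → E)
    (had : ∀ x : E, Tendsto (fun n => ∑ j ∈ Finset.range n, f j x • v j) atTop (𝓝 x))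
    (hbc : ∀ x'' : (E →L[ℝ] ℝ) →L[ℝ] ℝ,
      ∃ s : E, Tendsto (fun n => ∑ j ∈ Finset.range n, x'' (f j) • v j) atTop (𝓝 s)) :
    ∃ P : ((E →L[ℝ] ℝ) →L[ℝ] ℝ) →L[ℝ] E,
      (∀ x'' : (E →L[ℝ] ℝ) →L[ℝ] ℝ,
        Tendsto (fun n => ∑ j ∈ Finset.range n, x'' (f j) • v j) atTop (𝓝 (P x''))) ∧
      ∀ x : E, P (NormedSpace.inclusionInDoubleDual ℝ E x) = x := by
  obtain ⟨P, hP⟩ := exists_continuousLinearMap_tendsto_sum_smul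
    (fun j => ContinuousLinearMap.apply ℝ ℝ (f j)) v hbc
  exact ⟨P, hP, fun x =>
    tendsto_nhds_unique (hP (NormedSpace.inclusionInDoubleDual ℝ E x)) (had x)⟩

/-- If a Banach space `E` has a boundedly complete atomic decomposition `({x_j'}, {x_j})`,
then `P(x'') := ∑_j x''(x_j') x_j` defines a continuous linear map `E'' → E` which is a
left inverse of the canonical embedding; hence `E` is complemented in its bidual. -/
theorem stmt8 {E : Type*} [NormedAddCommGroup E] [NormedSpace ℝ E] [CompleteSpace E]
    (f : ℕ → E →L[ℝ] ℝ) (v : ℕ → E)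
    (had : ∀ x : E, Tendsto (fun n => ∑ j ∈ Finset.range n, f j x • v j) atTop (𝓝 x))
    (hbc : ∀ x'' : (E →L[ℝ] ℝ) →L[ℝ] ℝ,
      ∃ s : E, Tendsto (fun n => ∑ j ∈ Finset.range n, x'' (f j) • v j) atTop (𝓝 s)) :
    ∃ P : ((E →L[ℝ] ℝ) →L[ℝ] ℝ) →L[ℝ] E,
      (∀ x'' : (E →L[ℝ] ℝ) →L[ℝ] ℝ,
        Tendsto (fun n => ∑ j ∈ Finset.range n, x'' (f j) • v j) atTop (𝓝 (P x''))) ∧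
      ∀ x : E, P (NormedSpace.inclusionInDoubleDual ℝ E x) = x :=
  stmt8_general f v had hbc
end

section
/- Let E be a Banach space with an atomic decomposition ({x_j'}, {x_j}) that is both shrinking and boundedly complete. Then E is reflexive. -/
open Filter Topology

/-- A Banach space with an atomic decomposition that is both shrinking and boundedly
complete is reflexive. -/
theorem stmt9 {E : Type*} [NormedAddCommGroup E] [NormedSpace ℝ E] [CompleteSpace E]
    (f : ℕ → E →L[ℝ] ℝ) (v : ℕ → E)
    (had : ∀ x : E, Tendsto (fun n => ∑ j ∈ Finset.range n, f j x • v j) atTop (𝓝 x))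
    (hsh : ∀ u : E →L[ℝ] ℝ,
      Tendsto (fun n =>
          ‖u.comp (ContinuousLinearMap.id ℝ E -
            ∑ j ∈ Finset.range n, (f j).smulRight (v j))‖) atTop (𝓝 0))
    (hbc : ∀ x'' : (E →L[ℝ] ℝ) →L[ℝ] ℝ,
      ∃ s : E, Tendsto (fun n => ∑ j ∈ Finset.range n, x'' (f j) • v j) atTop (𝓝 s)) :
    Function.Surjective (NormedSpace.inclusionInDoubleDual ℝ E) := by
  intro x''
  obtain ⟨s, hs⟩ := hbc x''
  refine ⟨s, ?_⟩
  ext u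
  -- goal : u s = x'' u (roughly)
  have hcomp : ∀ n, u.comp (ContinuousLinearMap.id ℝ E -
      ∑ j ∈ Finset.range n, (f j).smulRight (v j))
      = u - ∑ j ∈ Finset.range n, (u (v j)) • f j := by
    intro n
    ext x
    simp [Finset.mul_sum, mul_comm]
  -- shrinking : partial sums converge to u in E'
  have h1 : Tendsto (fun n => ∑ j ∈ Finset.range n, (u (v j)) • f j) atTop (𝓝 u) := by
    rw [tendsto_iff_norm_sub_tendsto_zero]
    have := hsh u
    simp_rw [hcomp] at this
    simpa [norm_sub_rev] using this
  have h2 : Tendsto (fun n => ∑ j ∈ Finset.range n, u (v j) * x'' (f j)) atTop (𝓝 (x'' u)) := by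
    have := (x''.continuous.tendsto u).comp h1
    simpa [Function.comp_def, map_sum, map_smul, smul_eq_mul] using this
  have h3 : Tendsto (fun n => ∑ j ∈ Finset.range n, u (v j) * x'' (f j)) atTop (𝓝 (u s)) := by
    have := (u.continuous.tendsto s).comp hs
    simp only [Function.comp_def, map_sum, map_smul, smul_eq_mul] at this
    convert this using 2 with n
    exact Finset.sum_congr rfl fun j _ => mul_comm _ _
  have := tendsto_nhds_unique h3 h2
  simpa [NormedSpace.inclusionInDoubleDual] using this
end

section
/- Let E be a reflexive Banach space with an atomic decomposition ({x_j'}, {x_j}) satisfying: for each k, lim_{n→∞} ‖x_k' − ∑_{j=1}^n x_k'(x_j) x_j'‖ = 0 in E'. Then the atomic decomposition is shrinking, i.e. for every x' ∈ E', ‖∑_{j>n} x'(x_j) x_j'‖ → 0 as n → ∞. -/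
open Filter Topology

/-- If `E` is a reflexive Banach space with an atomic decomposition `({x_j'}, {x_j})`
satisfying `x_k' = ∑_j x_k'(x_j) x_j'` in `E'` for every `k`, then the atomic
decomposition is shrinking: `x' = ∑_j x'(x_j) x_j'` in the norm of `E'` for every `x'`. -/
theorem stmt10 {E : Type*} [NormedAddCommGroup E] [NormedSpace ℝ E] [CompleteSpace E]
    (hrefl : Function.Surjective (NormedSpace.inclusionInDoubleDual ℝ E))
    (f : ℕ → E →L[ℝ] ℝ) (v : ℕ → E)
    (had : ∀ x : E, Tendsto (fun n => ∑ j ∈ Finset.range n, f j x • v j) atTop (𝓝 x))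
    (hconv : ∀ k : ℕ,
      Tendsto (fun n => ‖f k - ∑ j ∈ Finset.range n, f k (v j) • f j‖) atTop (𝓝 0)) :
    ∀ u : E →L[ℝ] ℝ,
      Tendsto (fun n => ∑ j ∈ Finset.range n, u (v j) • f j) atTop (𝓝 u) := by
  -- partial sum operators
  set S : ℕ → E →L[ℝ] E := fun n => ∑ j ∈ Finset.range n, (f j).smulRight (v j) with hSdef
  have hSapp : ∀ n x, S n x = ∑ j ∈ Finset.range n, f j x • v j := by
    intro n x
    simp [hSdef, ContinuousLinearMap.sum_apply]
  -- uniform bound via Banach–Steinhaus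
  obtain ⟨C, hC⟩ : ∃ C, ∀ n, ‖S n‖ ≤ C := by
    apply banach_steinhaus
    intro x
    obtain ⟨B, hB⟩ := ((had x).norm).bddAbove_range
    exact ⟨B, fun n => by simpa [hSapp] using hB (Set.mem_range_self n)⟩
  have hC0 : 0 ≤ C := le_trans (norm_nonneg _) (hC 0)
  -- the sums are compositions with S n
  have hT : ∀ (n : ℕ) (u : E →L[ℝ] ℝ),
      (∑ j ∈ Finset.range n, u (v j) • f j) = u.comp (S n) := by
    intro n u
    ext x
    simp [hSapp, ContinuousLinearMap.sum_apply, map_sum, mul_comm]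
  -- convergence on the span of the f's
  have hP : ∀ w ∈ Submodule.span ℝ (Set.range f),
      Tendsto (fun n => ∑ j ∈ Finset.range n, w (v j) • f j) atTop (𝓝 w) := by
    intro w hw
    induction hw using Submodule.span_induction with
    | mem w hw =>
      obtain ⟨k, rfl⟩ := hw
      rw [tendsto_iff_norm_sub_tendsto_zero]
      simpa [norm_sub_rev] using hconv k
    | zero => simpa using (tendsto_const_nhds : Tendsto (fun _ : ℕ => (0 : E →L[ℝ] ℝ)) atTop _)
    | add a b ha hb iha ihb =>
      have : (fun n => ∑ j ∈ Finset.range n, (a + b) (v j) • f j)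
          = fun n => (∑ j ∈ Finset.range n, a (v j) • f j)
            + (∑ j ∈ Finset.range n, b (v j) • f j) := by
        funext n
        rw [← Finset.sum_add_distrib]
        exact Finset.sum_congr rfl fun j _ => by simp [add_smul]
      rw [this]
      exact iha.add ihb
    | smul r a ha ih =>
      have : (fun n => ∑ j ∈ Finset.range n, (r • a) (v j) • f j)
          = fun n => r • (∑ j ∈ Finset.range n, a (v j) • f j) := by
        funext n
        rw [Finset.smul_sum]
        exact Finset.sum_congr rfl fun j _ => by simp [smul_smul]
      rw [this]
      exact ih.const_smul r
  -- density of the span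
  have hdense : ∀ u : E →L[ℝ] ℝ,
      u ∈ closure ((Submodule.span ℝ (Set.range f) : Submodule ℝ (E →L[ℝ] ℝ)) :
        Set (E →L[ℝ] ℝ)) := by
    intro u
    by_contra hu
    have hconvx : Convex ℝ (closure ((Submodule.span ℝ (Set.range f) :
        Submodule ℝ (E →L[ℝ] ℝ)) : Set (E →L[ℝ] ℝ))) :=
      (Submodule.span ℝ (Set.range f)).convex.closure
    obtain ⟨g, c, hgu, hgt⟩ :=
      geometric_hahn_banach_point_closed hconvx isClosed_closure hu
    obtain ⟨x, hx⟩ := hrefl g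
    have hgapp : ∀ z : E →L[ℝ] ℝ, g z = z x := by
      intro z
      rw [← hx]; rfl
    have hfk : ∀ k, f k x = 0 := by
      intro k
      by_contra h
      have key : ∀ r : ℝ, c < r * f k x := by
        intro r
        have hmem : (r • f k) ∈ closure ((Submodule.span ℝ (Set.range f) :
            Submodule ℝ (E →L[ℝ] ℝ)) : Set (E →L[ℝ] ℝ)) :=
          subset_closure (Submodule.smul_mem _ r (Submodule.subset_span ⟨k, rfl⟩))
        have := hgt _ hmem
        rwa [map_smul, smul_eq_mul, hgapp] at this
      have h1 := key ((c - 1) / f k x)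
      rw [div_mul_cancel₀ _ h] at h1
      linarith
    have hx0 : x = 0 := by
      refine tendsto_nhds_unique (had x) ?_
      simpa [hfk] using (tendsto_const_nhds : Tendsto (fun _ : ℕ => (0 : E)) atTop _)
    have hg0 : g = 0 := by
      rw [← hx, hx0, map_zero]
    have h0mem : (0 : E →L[ℝ] ℝ) ∈ closure ((Submodule.span ℝ (Set.range f) :
        Submodule ℝ (E →L[ℝ] ℝ)) : Set (E →L[ℝ] ℝ)) :=
      subset_closure (Submodule.zero_mem _)
    have := hgt _ h0mem
    rw [hg0] at this hgu
    simp at this hgu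
    linarith
  -- final ε argument
  intro u
  rw [Metric.tendsto_atTop]
  intro ε hε
  have hεC : 0 < ε / (2 * (C + 1)) := by positivity
  obtain ⟨w, hwmem, hwd⟩ := Metric.mem_closure_iff.mp (hdense u) _ hεC
  obtain ⟨N, hN⟩ := Metric.tendsto_atTop.mp (hP w hwmem) (ε / 2) (by positivity)
  refine ⟨N, fun n hn => ?_⟩
  have hAB : dist (∑ j ∈ Finset.range n, u (v j) • f j)
      (∑ j ∈ Finset.range n, w (v j) • f j) ≤ dist u w * C := by
    rw [dist_eq_norm, hT n u, hT n w, ← ContinuousLinearMap.sub_comp]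
    calc ‖(u - w).comp (S n)‖ ≤ ‖u - w‖ * ‖S n‖ := (u - w).opNorm_comp_le (S n)
      _ ≤ dist u w * C := by
        rw [dist_eq_norm]
        exact mul_le_mul_of_nonneg_left (hC n) (norm_nonneg _)
  have hkey : dist u w * (2 * (C + 1)) < ε := (lt_div_iff₀ (by positivity)).mp hwd
  have hd0 : (0:ℝ) ≤ dist u w := dist_nonneg
  calc dist (∑ j ∈ Finset.range n, u (v j) • f j) u
      ≤ dist (∑ j ∈ Finset.range n, u (v j) • f j) (∑ j ∈ Finset.range n, w (v j) • f j)
        + dist (∑ j ∈ Finset.range n, w (v j) • f j) w + dist w u := dist_triangle4 _ _ _ _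
    _ < dist u w * C + ε / 2 + dist u w := by
        have := hN n hn
        rw [dist_comm w u]
        linarith [hAB]
    _ ≤ ε := by nlinarith [hkey]
end

section
/- Let E be a Banach space with atomic decomposition ({x_j'}, {x_j}) such that for each k ∈ ℕ, lim_{n→∞} ‖x_k' − ∑_{j=1}^n x_k'(x_j) x_j'‖ = 0 in E'. Then ({x_j}, {x_j'}) is an atomic decomposition of the closed linear span H of {x_j' : j ∈ ℕ} in E'; that is, every x' ∈ H satisfies x' = ∑_{j=1}^∞ x'(x_j) x_j' with convergence in the norm of E'. -/
open Filter Topology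

/-- If an atomic decomposition `({x_j'}, {x_j})` of a Banach space `E` satisfies
`x_k' = ∑_j x_k'(x_j) x_j'` in `E'` for every `k`, then `({x_j}, {x_j'})` is an atomic
decomposition of the closed linear span `H` of `{x_j'}` in `E'`. -/
theorem stmt11 {E : Type*} [NormedAddCommGroup E] [NormedSpace ℝ E] [CompleteSpace E]
    (f : ℕ → E →L[ℝ] ℝ) (v : ℕ → E)
    (had : ∀ x : E, Tendsto (fun n => ∑ j ∈ Finset.range n, f j x • v j) atTop (𝓝 x))
    (hconv : ∀ k : ℕ,
      Tendsto (fun n => ‖f k - ∑ j ∈ Finset.range n, f k (v j) • f j‖) atTop (𝓝 0)) :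
    ∀ u ∈ closure (Submodule.span ℝ (Set.range f) : Set (E →L[ℝ] ℝ)),
      Tendsto (fun n => ∑ j ∈ Finset.range n, u (v j) • f j) atTop (𝓝 u) := by
  set S : ℕ → E →L[ℝ] E := fun n => ∑ j ∈ Finset.range n, (f j).smulRight (v j) with hSdef
  have hSapp : ∀ n x, S n x = ∑ j ∈ Finset.range n, f j x • v j := by
    intro n x
    simp [hSdef]
  -- uniform bound via Banach–Steinhaus
  obtain ⟨C, hC⟩ : ∃ C, ∀ n, ‖S n‖ ≤ C := by
    apply banach_steinhaus
    intro x
    have hb : BddAbove (Set.range fun n => ‖S n x‖) := by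
      have := ((had x).norm).bddAbove_range
      simpa [hSapp] using this
    obtain ⟨C, hC⟩ := hb
    exact ⟨C, fun n => hC ⟨n, rfl⟩⟩
  have hC0 : 0 ≤ C := le_trans (norm_nonneg _) (hC 0)
  -- partial sums as composition
  have hTcomp : ∀ (u : E →L[ℝ] ℝ) n,
      (∑ j ∈ Finset.range n, u (v j) • f j) = u.comp (S n) := by
    intro u n
    ext x
    simp [hSapp, map_sum, mul_comm]
  -- convergence on the span
  have hspan : ∀ u ∈ Submodule.span ℝ (Set.range f),
      Tendsto (fun n => u.comp (S n)) atTop (𝓝 u) := by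
    intro u hu
    induction hu using Submodule.span_induction with
    | mem x hx =>
      obtain ⟨k, rfl⟩ := hx
      rw [tendsto_iff_norm_sub_tendsto_zero]
      have h := hconv k
      convert h using 2 with n
      rw [← hTcomp, norm_sub_rev]
    | zero => simp only [ContinuousLinearMap.zero_comp]; exact (tendsto_const_nhds : Tendsto (fun _ : ℕ => (0 : E →L[ℝ] ℝ)) atTop _)
    | add x y hx hy ihx ihy => simpa [ContinuousLinearMap.add_comp] using ihx.add ihy
    | smul a x hx ih => simpa [ContinuousLinearMap.smul_comp] using ih.const_smul a
  -- density argument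
  intro u hu
  simp only [hTcomp]
  rw [Metric.tendsto_atTop]
  intro ε hε
  obtain ⟨w, hw_mem, hw⟩ : ∃ w ∈ Submodule.span ℝ (Set.range f), ‖u - w‖ < ε / (2 * (C + 1)) := by
    obtain ⟨w, hw1, hw2⟩ := Metric.mem_closure_iff.mp hu (ε / (2 * (C + 1))) (by positivity)
    exact ⟨w, hw1, by rwa [dist_eq_norm] at hw2⟩
  have hw_t := hspan w hw_mem
  rw [Metric.tendsto_atTop] at hw_t
  obtain ⟨N, hN⟩ := hw_t (ε / 2) (by positivity)
  refine ⟨N, fun n hn => ?_⟩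
  have h1 : ‖u.comp (S n) - w.comp (S n)‖ ≤ ‖u - w‖ * C := by
    rw [← ContinuousLinearMap.sub_comp]
    calc ‖(u - w).comp (S n)‖ ≤ ‖u - w‖ * ‖S n‖ := ContinuousLinearMap.opNorm_comp_le _ _
      _ ≤ ‖u - w‖ * C := by
        exact mul_le_mul_of_nonneg_left (hC n) (norm_nonneg _)
  have h2 := hN n hn
  have tri := dist_triangle4 (u.comp (S n)) (w.comp (S n)) w u
  simp only [dist_eq_norm] at tri h2 ⊢
  have hwu : ‖w - u‖ = ‖u - w‖ := norm_sub_rev _ _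
  have key : ‖u - w‖ * (C + 1) < ε / 2 := by
    rw [← lt_div_iff₀ (by positivity : (0:ℝ) < C + 1), div_div]
    exact hw
  nlinarith [norm_nonneg (u - w)]
end

section
/- Let X be a normed space, E a barrelled locally convex space, and G a locally convex space. Then every separately continuous bilinear map B : X × E → G is (jointly) continuous. -/
/-!
By the uniform boundedness principle in the barrelled space `E`, the maps `B x` with `‖x‖ < 1`
are equicontinuous. Concretely, for a continuous seminorm `p` on `G` the supremum `r` of the
seminorms `p ∘ B x`, `‖x‖ < 1`, is finite pointwise because `x ↦ B x y` is continuous on a normed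
space, and a pointwise bounded supremum of continuous seminorms on a barrelled space is
continuous. The bound `p (B x y) ≤ r y` on `ball 0 1 × E` gives continuity at the origin, and
bilinearity together with separate continuity moves it to every point.
-/

open Filter Topology

section

variable {𝕜 X E G : Type*} [NontriviallyNormedField 𝕜]
  [SeminormedAddCommGroup X] [NormedSpace 𝕜 X]
  [AddCommGroup E] [Module 𝕜 E] [TopologicalSpace E] [BarrelledSpace 𝕜 E]
  [AddCommGroup G] [Module 𝕜 G] [TopologicalSpace G]

theorem LinearMap.exists_continuous_seminorm_bound_on_unitBall (B : X →ₗ[𝕜] E →ₗ[𝕜] G)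
    (p : Seminorm 𝕜 G) (hp : Continuous p) (h1 : ∀ x, Continuous fun y => B x y)
    (h2 : ∀ y, Continuous fun x => B x y) :
    ∃ r : Seminorm 𝕜 E, Continuous r ∧
      ∀ x ∈ Metric.ball (0 : X) 1, ∀ y, p (B x y) ≤ r y := by
  let P : Metric.ball (0 : X) 1 → Seminorm 𝕜 E := fun x => p.comp (B x)
  have bdd : BddAbove (Set.range P) := by
    refine Seminorm.bddAbove_range_iff.mpr fun y => ?_
    obtain ⟨C, hC, hCy⟩ := (p.comp (B.flip y)).bound_of_continuous_normedSpace (hp.comp (h2 y))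
    refine ⟨C, Set.forall_mem_range.mpr fun x => ?_⟩
    calc p (B x y) ≤ C * ‖(x : X)‖ := hCy x
      _ ≤ C := mul_le_of_le_one_right hC.le (mem_ball_zero_iff.mp x.2).le
  refine ⟨⨆ x, P x, ?_, fun x hx y => le_ciSup bdd ⟨x, hx⟩ y⟩
  rw [Seminorm.coe_iSup_eq bdd]
  exact Seminorm.continuous_iSup P (fun x => hp.comp (h1 x)) bdd

theorem LinearMap.tendsto_nhds_zero_of_separatelyContinuous {ι : Type*}
    {q : SeminormFamily 𝕜 G ι} (hq : WithSeminorms q) (B : X →ₗ[𝕜] E →ₗ[𝕜] G)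
    (h1 : ∀ x, Continuous fun y => B x y) (h2 : ∀ y, Continuous fun x => B x y) :
    Tendsto (fun z : X × E => B z.1 z.2) (𝓝 0) (𝓝 0) := by
  refine (hq.tendsto_nhds _ _).mpr fun k ε hε => ?_
  obtain ⟨r, hr, hqr⟩ :=
    B.exists_continuous_seminorm_bound_on_unitBall (q k) (hq.continuous_seminorm k) h1 h2
  have hx : ∀ᶠ z : X × E in 𝓝 0, z.1 ∈ Metric.ball (0 : X) 1 :=
    continuous_fst.tendsto (0 : X × E) (Metric.ball_mem_nhds _ one_pos)
  have hy : ∀ᶠ z : X × E in 𝓝 0, r z.2 < ε :=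
    (hr.comp continuous_snd).tendsto' 0 0 (by simp) (Iio_mem_nhds hε)
  filter_upwards [hx, hy] with z hzx hzy
  rw [sub_zero]
  exact (hqr z.1 hzx z.2).trans_lt hzy

end

theorem stmt12_general {X E G : Type*} [NormedAddCommGroup X] [NormedSpace ℝ X]
    [AddCommGroup E] [Module ℝ E] [TopologicalSpace E] [IsTopologicalAddGroup E]
    [BarrelledSpace ℝ E]
    [AddCommGroup G] [Module ℝ G] [TopologicalSpace G] [IsTopologicalAddGroup G]
    [ContinuousSMul ℝ G] [LocallyConvexSpace ℝ G]
    (B : X →ₗ[ℝ] E →ₗ[ℝ] G)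
    (h1 : ∀ x : X, Continuous fun y : E => B x y)
    (h2 : ∀ y : E, Continuous fun x : X => B x y) :
    Continuous fun p : X × E => B p.1 p.2 :=
  continuous_of_continuousAt_zero₂ (LinearMap.toAddMonoidHom'.comp B.toAddMonoidHom)
    (by simpa [ContinuousAt, Prod.mk_zero_zero] using
      B.tendsto_nhds_zero_of_separatelyContinuous (with_gaugeSeminormFamily (𝕜 := ℝ)) h1 h2)
    (fun x => (h1 x).continuousAt) (fun y => (h2 y).continuousAt)

/-- Every separately continuous bilinear map from the product of a normed space and a
barrelled locally convex space into a locally convex space is jointly continuous. -/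
theorem stmt12 {X E G : Type*} [NormedAddCommGroup X] [NormedSpace ℝ X]
    [AddCommGroup E] [Module ℝ E] [TopologicalSpace E] [IsTopologicalAddGroup E]
    [ContinuousSMul ℝ E] [LocallyConvexSpace ℝ E] [BarrelledSpace ℝ E]
    [AddCommGroup G] [Module ℝ G] [TopologicalSpace G] [IsTopologicalAddGroup G]
    [ContinuousSMul ℝ G] [LocallyConvexSpace ℝ G]
    (B : X →ₗ[ℝ] E →ₗ[ℝ] G)
    (h1 : ∀ x : X, Continuous fun y : E => B x y)
    (h2 : ∀ y : E, Continuous fun x : X => B x y) :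
    Continuous fun p : X × E => B p.1 p.2 :=
  stmt12_general B h1 h2
end

section
/- Let E be a Banach space with atomic decomposition ({x_j'}, {x_j}) such that x_1'(x_1) ≠ 1. Then the operator S : E → E, S(x) := ∑_{j=2}^∞ x_j'(x) x_j, is a topological isomorphism of E onto itself, and consequently there exists a sequence (y_j')_j ⊂ E' such that ({y_j'}_j , {x_{j+1}}_j ) is an atomic decomposition of E (one element of the decomposition can be removed). -/
open Filter Topology

/-- If `({x_j'}, {x_j})` is an atomic decomposition of a Banach space `E` with
`x_1'(x_1) ≠ 1`, then `S(x) = ∑_{j≥2} x_j'(x) x_j = x - x_1'(x) x_1` is a topological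
isomorphism of `E`, and one element of the decomposition can be removed: there are
functionals `(y_j')` making `({y_j'}, {x_{j+1}})` an atomic decomposition of `E`.
(Sequences are indexed by `ℕ` starting at `0`, so `x_1 = v 0`.) -/
theorem stmt17 {E : Type*} [NormedAddCommGroup E] [NormedSpace ℝ E] [CompleteSpace E]
    (f : ℕ → E →L[ℝ] ℝ) (v : ℕ → E)
    (had : ∀ x : E, Tendsto (fun n => ∑ j ∈ Finset.range n, f j x • v j) atTop (𝓝 x))
    (h1 : f 0 (v 0) ≠ 1) :
    (∃ S : E ≃L[ℝ] E, ∀ x : E, S x = x - f 0 x • v 0) ∧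
    (∃ y' : ℕ → E →L[ℝ] ℝ, ∀ x : E,
      Tendsto (fun n => ∑ j ∈ Finset.range n, y' j x • v (j + 1)) atTop (𝓝 x)) := by
  have hne : (1 : ℝ) - f 0 (v 0) ≠ 0 := sub_ne_zero.mpr (Ne.symm h1)
  set Smap : E →L[ℝ] E := ContinuousLinearMap.id ℝ E - (f 0).smulRight (v 0) with hS
  set Sinv : E →L[ℝ] E := ContinuousLinearMap.id ℝ E + (1 - f 0 (v 0))⁻¹ • (f 0).smulRight (v 0) with hSi
  have hSapp : ∀ x : E, Smap x = x - f 0 x • v 0 := by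
    intro x; simp [hS]
  have hSiapp : ∀ x : E, Sinv x = x + ((1 - f 0 (v 0))⁻¹ * f 0 x) • v 0 := by
    intro x; simp [hSi, smul_smul]
  have hleft : ∀ x : E, Sinv (Smap x) = x := by
    intro x
    rw [hSapp, hSiapp]
    simp only [map_sub, map_smul, smul_eq_mul]
    match_scalars <;> field_simp [hne] <;> ring
  have hright : ∀ x : E, Smap (Sinv x) = x := by
    intro x
    rw [hSiapp, hSapp]
    simp only [map_add, map_smul, smul_eq_mul]
    match_scalars <;> field_simp [hne] <;> ring
  set S : E ≃L[ℝ] E := ContinuousLinearEquiv.equivOfInverse Smap Sinv hleft hright with hSdef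
  refine ⟨⟨S, fun x => hSapp x⟩, ⟨fun j => (f (j + 1)).comp (S.symm : E →L[ℝ] E), fun y => ?_⟩⟩
  -- For x := S.symm y, the tail sums converge to S x = y.
  set x : E := S.symm y with hx
  have hSx : Smap x = y := by
    have := S.apply_symm_apply y
    simpa [hSdef, hx] using this
  have h2 : Tendsto (fun n => ∑ j ∈ Finset.range (n + 1), f j x • v j) atTop (𝓝 x) :=
    (had x).comp (tendsto_add_atTop_nat 1)
  have h3 : ∀ n, ∑ j ∈ Finset.range (n + 1), f j x • v j
      = (∑ j ∈ Finset.range n, f (j + 1) x • v (j + 1)) + f 0 x • v 0 := fun n =>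
    Finset.sum_range_succ' (fun j => f j x • v j) n
  have h4 : Tendsto (fun n => ∑ j ∈ Finset.range n, f (j + 1) x • v (j + 1)) atTop
      (𝓝 (x - f 0 x • v 0)) := by
    have := h2.sub (tendsto_const_nhds (x := f 0 x • v 0))
    simp only [h3, add_sub_cancel_right] at this
    exact this
  have hgoal : x - f 0 x • v 0 = y := by rw [← hSapp, hSx]
  rw [hgoal] at h4
  exact h4
end

section
/- Let E be a Banach space with a shrinking atomic decomposition ({x_j'}, {x_j}). Then ({x_j}, {x_j'}) is a boundedly complete atomic decomposition of the dual E': it is an atomic decomposition of E' (x' = ∑_j x'(x_j) x_j' in norm for every x' ∈ E'), and for every x''' ∈ E''' the series ∑_j x'''(x_j) x_j' converges in the norm of E'. -/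
open Filter Topology

/-- If `({x_j'}, {x_j})` is a shrinking atomic decomposition of a Banach space `E`, then
`({x_j}, {x_j'})` is a boundedly complete atomic decomposition of the dual `E'`:
`x' = ∑_j x'(x_j) x_j'` in norm for every `x' ∈ E'`, and for every `x''' ∈ E'''` the
series `∑_j x'''(x_j) x_j'` converges in `E'`. -/
theorem stmt19 {E : Type*} [NormedAddCommGroup E] [NormedSpace ℝ E] [CompleteSpace E]
    (f : ℕ → E →L[ℝ] ℝ) (v : ℕ → E)
    (had : ∀ x : E, Tendsto (fun n => ∑ j ∈ Finset.range n, f j x • v j) atTop (𝓝 x))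
    (hsh : ∀ u : E →L[ℝ] ℝ,
      Tendsto (fun n =>
          ‖u.comp (ContinuousLinearMap.id ℝ E -
            ∑ j ∈ Finset.range n, (f j).smulRight (v j))‖) atTop (𝓝 0)) :
    (∀ u : E →L[ℝ] ℝ,
        Tendsto (fun n => ∑ j ∈ Finset.range n, u (v j) • f j) atTop (𝓝 u)) ∧
    (∀ φ : ((E →L[ℝ] ℝ) →L[ℝ] ℝ) →L[ℝ] ℝ,
        ∃ w : E →L[ℝ] ℝ,
          Tendsto (fun n =>
              ∑ j ∈ Finset.range n,
                φ (NormedSpace.inclusionInDoubleDual ℝ E (v j)) • f j)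
            atTop (𝓝 w)) := by
  have key : ∀ u : E →L[ℝ] ℝ,
      Tendsto (fun n => ∑ j ∈ Finset.range n, u (v j) • f j) atTop (𝓝 u) := by
    intro u
    rw [tendsto_iff_norm_sub_tendsto_zero]
    have heq : ∀ n, (∑ j ∈ Finset.range n, u (v j) • f j) - u
        = -(u.comp (ContinuousLinearMap.id ℝ E -
            ∑ j ∈ Finset.range n, (f j).smulRight (v j))) := by
      intro n
      ext x
      simp [ContinuousLinearMap.sum_apply, Finset.mul_sum, mul_comm]
    simpa only [heq, norm_neg] using hsh u
  refine ⟨key, fun φ => ?_⟩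
  refine ⟨φ.comp (NormedSpace.inclusionInDoubleDual ℝ E), ?_⟩
  have := key (φ.comp (NormedSpace.inclusionInDoubleDual ℝ E))
  simpa using this
end
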